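/- For any C² function u on ℝ^{1+n}: K₁u · □u = (1/2) ∂_t( t Σ_{α=0}^n |∂_α u|² + 2 x^b ∂_b u ∂_t u ) − (1/2) ∂_a( 2t ∂_t u ∂_a u + 2 x^b ∂_b u ∂_a u + x^a |∂_t u|² − x^a Σ_b |∂_b u|² ) + ((n-1)/2)( |∂_t u|² − Σ_b |∂_b u|² ), where K₁ = t∂_t + x^a∂_a. -/

import Mathlib

/-!
Expand both divergences by the product rule. With `V = ∂u` and `W = ∂²u`, every term is then
linear in `W`; the two spatial terms `x^b ∂_a∂_b u ∂_a u` coming from `∂_a(x^b ∂_b u ∂_a u)` and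
`∂_a(x^a |∇u|²)` cancel by the symmetry of the Hessian, the `t`- and `x`-weighted second-order
terms reassemble into `K₁u · □u`, and differentiating the weights `t` and `x^a` leaves
`((n-1)/2)(|∂_t u|² - |∇u|²)`.
-/

noncomputable section

/-- Partial derivative in the `i`-th coordinate direction on `ℝ^m`. -/
def pd {m : ℕ} (u : (Fin m → ℝ) → ℝ) (i : Fin m) (x : Fin m → ℝ) : ℝ :=
  fderiv ℝ u x (Pi.single i 1)

/-- D'Alembert operator `□ = ∂_t² − Σ_a ∂_a²` on `ℝ^{1+n}` (index `0` is time). -/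
def Box {n : ℕ} (u : (Fin (n + 1) → ℝ) → ℝ) (p : Fin (n + 1) → ℝ) : ℝ :=
  pd (pd u 0) 0 p - ∑ a : Fin n, pd (pd u a.succ) a.succ p

/-- Scaling field `K₁u = t ∂_t u + x^a ∂_a u`. -/
def K1 {n : ℕ} (u : (Fin (n + 1) → ℝ) → ℝ) (p : Fin (n + 1) → ℝ) : ℝ :=
  p 0 * pd u 0 p + ∑ a : Fin n, p a.succ * pd u a.succ p

open Finset

section PartialDerivative

variable {m : ℕ} {f g : (Fin m → ℝ) → ℝ} {p : Fin m → ℝ} {i : Fin m}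

lemma pd_add (hf : DifferentiableAt ℝ f p) (hg : DifferentiableAt ℝ g p) :
    pd (fun q => f q + g q) i p = pd f i p + pd g i p := by
  simp [pd, fderiv_fun_add hf hg]

lemma pd_sub (hf : DifferentiableAt ℝ f p) (hg : DifferentiableAt ℝ g p) :
    pd (fun q => f q - g q) i p = pd f i p - pd g i p := by
  simp [pd, fderiv_fun_sub hf hg]

lemma pd_mul (hf : DifferentiableAt ℝ f p) (hg : DifferentiableAt ℝ g p) :
    pd (fun q => f q * g q) i p = pd f i p * g p + f p * pd g i p := by
  simp [pd, fderiv_fun_mul hf hg]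
  ring

lemma pd_sq (hf : DifferentiableAt ℝ f p) :
    pd (fun q => f q ^ 2) i p = 2 * f p * pd f i p := by
  simp only [sq, pd_mul hf hf]
  ring

lemma pd_sum {ι : Type*} (s : Finset ι) {F : ι → (Fin m → ℝ) → ℝ}
    (hF : ∀ j ∈ s, DifferentiableAt ℝ (F j) p) :
    pd (fun q => ∑ j ∈ s, F j q) i p = ∑ j ∈ s, pd (F j) i p := by
  simp [pd, fderiv_fun_sum hF]

lemma pd_const (c : ℝ) : pd (fun _ => c) i p = 0 := by
  simp [pd]

lemma pd_coord (j : Fin m) : pd (fun q => q j) i p = if j = i then 1 else 0 := by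
  simp [pd, (hasFDerivAt_apply j p).fderiv, Pi.single_apply]

variable {u : (Fin m → ℝ) → ℝ}

@[fun_prop]
lemma differentiableAt_pd (hu : ContDiff ℝ 2 u) (α : Fin m) (p : Fin m → ℝ) :
    DifferentiableAt ℝ (pd u α) p := by
  have h1 : ContDiff ℝ 1 (fderiv ℝ u) := hu.fderiv_right (by norm_num)
  exact ((h1.clm_apply contDiff_const).differentiable one_ne_zero).differentiableAt

lemma pd_pd_comm (hu : ContDiff ℝ 2 u) (α β : Fin m) (p : Fin m → ℝ) :
    pd (pd u α) β p = pd (pd u β) α p := by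
  have hd : DifferentiableAt ℝ (fderiv ℝ u) p :=
    ((hu.fderiv_right (by norm_num)).differentiable one_ne_zero).differentiableAt
  have pd_pd_eq : ∀ γ δ : Fin m,
      pd (pd u γ) δ p = fderiv ℝ (fderiv ℝ u) p (Pi.single δ 1) (Pi.single γ 1) := by
    intro γ δ
    unfold pd
    simp [fderiv_clm_apply hd (differentiableAt_const _)]
  rw [pd_pd_eq, pd_pd_eq]
  exact hu.contDiffAt.isSymmSndFDerivAt (by norm_num) _ _

end PartialDerivative

section ScalingFlux

variable {n : ℕ} {u : (Fin (n + 1) → ℝ) → ℝ}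

lemma pd_scaling_time_flux (hu : ContDiff ℝ 2 u) (p : Fin (n + 1) → ℝ) :
    pd (fun q => q 0 * ∑ α : Fin (n + 1), (pd u α q) ^ 2 +
        2 * (∑ b : Fin n, q b.succ * pd u b.succ q) * pd u 0 q) 0 p =
      pd u 0 p ^ 2 + ∑ a : Fin n, pd u a.succ p ^ 2 +
        2 * p 0 * (pd u 0 p * pd (pd u 0) 0 p + ∑ a : Fin n, pd u a.succ p * pd (pd u 0) a.succ p) +
        2 * (∑ a : Fin n, p a.succ * pd (pd u 0) a.succ p) * pd u 0 p +
        2 * (∑ a : Fin n, p a.succ * pd u a.succ p) * pd (pd u 0) 0 p := by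
  simp (disch := fun_prop) only [pd_add, pd_mul, pd_sum, pd_sq, pd_coord, pd_const]
  simp only [Fin.sum_univ_succ, pd_pd_comm hu _ 0, Fin.succ_ne_zero, if_true, if_false, one_mul,
    zero_mul, zero_add]
  simp only [mul_assoc, ← mul_sum]
  ring

lemma pd_scaling_space_flux (hu : ContDiff ℝ 2 u) (p : Fin (n + 1) → ℝ) (a : Fin n) :
    pd (fun q => 2 * q 0 * pd u 0 q * pd u a.succ q +
        2 * (∑ b : Fin n, q b.succ * pd u b.succ q) * pd u a.succ q +
        q a.succ * (pd u 0 q) ^ 2 - q a.succ * (∑ b : Fin n, (pd u b.succ q) ^ 2)) a.succ p =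
      2 * p 0 * (pd u a.succ p * pd (pd u 0) a.succ p + pd u 0 p * pd (pd u a.succ) a.succ p) +
        2 * (pd u a.succ p + ∑ b : Fin n, p b.succ * pd (pd u b.succ) a.succ p) * pd u a.succ p +
        2 * (∑ b : Fin n, p b.succ * pd u b.succ p) * pd (pd u a.succ) a.succ p +
        pd u 0 p ^ 2 + 2 * p a.succ * pd u 0 p * pd (pd u 0) a.succ p -
        ∑ b : Fin n, pd u b.succ p ^ 2 -
        2 * p a.succ * ∑ b : Fin n, pd u b.succ p * pd (pd u b.succ) a.succ p := by
  simp (disch := fun_prop) only [pd_add, pd_sub, pd_mul, pd_sum, pd_sq, pd_coord, pd_const]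
  simp only [(Fin.succ_ne_zero a).symm, Fin.succ_inj, if_true, if_false, ite_mul, one_mul, zero_mul,
    zero_add, sum_add_distrib, sum_ite_eq', mem_univ]
  simp only [mul_assoc, ← mul_sum]
  ring

end ScalingFlux

-- `V₀, V, W₀₀, M, W` stand for `∂_t u, ∂_a u, ∂_t²u, ∂_t∂_a u, ∂_a∂_b u` at the point `(t, x)`.
lemma scaling_multiplier_algebra {n : ℕ} (t V₀ W₀₀ : ℝ) (x V M : Fin n → ℝ)
    (W : Fin n → Fin n → ℝ) (hW : ∀ a b, W a b = W b a) :
    (t * V₀ + ∑ a, x a * V a) * (W₀₀ - ∑ a, W a a) =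
      1 / 2 * (V₀ ^ 2 + ∑ a, V a ^ 2 + 2 * t * (V₀ * W₀₀ + ∑ a, V a * M a) +
          2 * (∑ a, x a * M a) * V₀ + 2 * (∑ a, x a * V a) * W₀₀) -
        1 / 2 * ∑ a, (2 * t * (V a * M a + V₀ * W a a) + 2 * (V a + ∑ b, x b * W b a) * V a +
          2 * (∑ b, x b * V b) * W a a + V₀ ^ 2 + 2 * x a * V₀ * M a - ∑ b, V b ^ 2 -
          2 * x a * ∑ b, V b * W b a) +
      ((n : ℝ) - 1) / 2 * (V₀ ^ 2 - ∑ a, V a ^ 2) := by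
  have hswap : ∑ a, x a * ∑ b, V b * W b a = ∑ a, (∑ b, x b * W b a) * V a := by
    simp only [mul_sum, sum_mul]
    rw [sum_comm]
    exact sum_congr rfl fun a _ => sum_congr rfl fun b _ => by rw [hW]; ring
  rw [sum_congr rfl fun a _ => show 2 * t * (V a * M a + V₀ * W a a) +
      2 * (V a + ∑ b, x b * W b a) * V a + 2 * (∑ b, x b * V b) * W a a + V₀ ^ 2 +
      2 * x a * V₀ * M a - ∑ b, V b ^ 2 - 2 * x a * ∑ b, V b * W b a =
      2 * t * (V a * M a) + 2 * t * V₀ * W a a + 2 * V a ^ 2 + 2 * ((∑ b, x b * W b a) * V a) +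
      2 * (∑ b, x b * V b) * W a a + V₀ ^ 2 + 2 * V₀ * (x a * M a) - ∑ b, V b ^ 2 -
      2 * (x a * ∑ b, V b * W b a) by ring]
  simp only [sum_add_distrib, sum_sub_distrib, ← mul_sum, sum_const, card_univ,
    Fintype.card_fin, nsmul_eq_mul, hswap]
  ring

theorem divergence_identity_scaling_general
    (n : ℕ) (u : (Fin (n + 1) → ℝ) → ℝ) (hu : ContDiff ℝ 2 u)
    (p : Fin (n + 1) → ℝ) :
    K1 u p * Box u p =
      (1 / 2) * pd (fun q =>
          q 0 * ∑ α : Fin (n + 1), (pd u α q) ^ 2 +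
            2 * (∑ b : Fin n, q b.succ * pd u b.succ q) * pd u 0 q) 0 p -
      (1 / 2) * (∑ a : Fin n, pd (fun q =>
          2 * q 0 * pd u 0 q * pd u a.succ q +
            2 * (∑ b : Fin n, q b.succ * pd u b.succ q) * pd u a.succ q +
            q a.succ * (pd u 0 q) ^ 2 -
            q a.succ * (∑ b : Fin n, (pd u b.succ q) ^ 2)) a.succ p) +
      (((n : ℝ) - 1) / 2) * ((pd u 0 p) ^ 2 - ∑ b : Fin n, (pd u b.succ p) ^ 2) := by
  rw [pd_scaling_time_flux hu p, sum_congr rfl fun a _ => pd_scaling_space_flux hu p a]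
  unfold K1 Box
  exact scaling_multiplier_algebra (p 0) (pd u 0 p) (pd (pd u 0) 0 p) (fun a => p a.succ)
    (fun a => pd u a.succ p) (fun a => pd (pd u 0) a.succ p) (fun a b => pd (pd u a.succ) b.succ p)
    fun a b => pd_pd_comm hu _ _ p

/-- pointwise identity for the multiplier `K₁u`:
`K₁u·□u = (1/2)∂_t( t Σ|∂u|² + 2x^b∂_bu ∂_tu ) − (1/2)∂_a(...)
  + ((n-1)/2)(|∂_tu|² − Σ|∂_bu|²)`. -/
theorem divergence_identity_scaling
    (n : ℕ) (hn : 1 ≤ n) (u : (Fin (n + 1) → ℝ) → ℝ) (hu : ContDiff ℝ 2 u)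
    (p : Fin (n + 1) → ℝ) :
    K1 u p * Box u p =
      (1 / 2) * pd (fun q =>
          q 0 * ∑ α : Fin (n + 1), (pd u α q) ^ 2 +
            2 * (∑ b : Fin n, q b.succ * pd u b.succ q) * pd u 0 q) 0 p -
      (1 / 2) * (∑ a : Fin n, pd (fun q =>
          2 * q 0 * pd u 0 q * pd u a.succ q +
            2 * (∑ b : Fin n, q b.succ * pd u b.succ q) * pd u a.succ q +
            q a.succ * (pd u 0 q) ^ 2 -
            q a.succ * (∑ b : Fin n, (pd u b.succ q) ^ 2)) a.succ p) +
      (((n : ℝ) - 1) / 2) * ((pd u 0 p) ^ 2 - ∑ b : Fin n, (pd u b.succ p) ^ 2) :=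
  divergence_identity_scaling_general n u hu p
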